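/- Let d ≤ e < f be integers with d + e + f = 0, and assume k > e. Suppose val(α) = d, val(β) ≥ d, and val(α·γ − β·ε^j) = d + e. Then: val(a) = d − j < 0; val(c) = e − k < 0; val(b) = i − f and val(b) < val(a); and val(b − a·c) = d + e − 2k, which is strictly less than val(c). -/

import Mathlib

noncomputable section

/-- The ε-adic valuation on `L = k̄((ε))`, with `val 0 = ∞`. -/
def val {K : Type*} [Field K] (x : LaurentSeries K) : WithTop ℤ := x.orderTop

/-- The uniformizer ε of the Laurent series field. -/
def eps (K : Type*) [Field K] : LaurentSeries K := HahnSeries.single 1 1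

/-- `σ : L → L` is the Frobenius automorphism: it fixes ε and raises each Laurent-series
coefficient to the `q`-th power.  (This property determines `σ` uniquely.) -/
def IsFrobenius (K : Type*) [Field K] (q : ℕ)
    (σ : LaurentSeries K → LaurentSeries K) : Prop :=
  ∀ (x : LaurentSeries K) (n : ℤ), (σ x).coeff n = (x.coeff n) ^ q


/-!
Each of `α`, `γ`, `ε^i σ(b) − ε^k b = β + aγ` and `ε^i σ(b − ac) − ε^k (b − ac) = β − α σ(c)` has
the shape `ε^m σ(u) − ε^n u` with `n < m`; as `σ` preserves valuations, its valuation is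
`n + val u`. This reads off `val a` from `val α`. Since `val (β ε^j) ≥ d + j > d + e`, the minor
condition forces `val (αγ) = d + e`, hence `val γ = e` and `val c = e − k`. In the last two
identities the term `aγ`, resp. `α σ(c)`, has valuation below `d ≤ val β`, so it alone determines
the valuation, which gives `val b` and `val (b − ac)`.
-/

theorem WithTop.eq_coe_sub_of_coe_add_eq {n m : ℤ} {x : WithTop ℤ} (h : (n : WithTop ℤ) + x = m) :
    x = ((m - n : ℤ) : WithTop ℤ) := by
  induction x with
  | top => simp at h
  | coe x => norm_cast at h ⊢; omega

section Valuation

variable {K : Type*} [Field K]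

theorem val_eq_top_iff {x : LaurentSeries K} : val x = ⊤ ↔ x = 0 :=
  HahnSeries.orderTop_eq_top

theorem val_mul (x y : LaurentSeries K) : val (x * y) = val x + val y :=
  HahnSeries.orderTop_mul x y

theorem val_eps_zpow_mul (n : ℤ) (x : LaurentSeries K) : val (eps K ^ n * x) = n + val x := by
  rw [val_mul, eps, ← RatFunc.single_zpow, val, HahnSeries.orderTop_single one_ne_zero]

theorem val_eq_of_coeff_ne_zero_iff {x y : LaurentSeries K}
    (h : ∀ n, y.coeff n ≠ 0 ↔ x.coeff n ≠ 0) : val y = val x := by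
  have hs : y.support = x.support := Set.ext h
  have h0 : y = 0 ↔ x = 0 := by
    rw [← HahnSeries.support_eq_empty_iff, hs, HahnSeries.support_eq_empty_iff]
  unfold val HahnSeries.orderTop
  by_cases hx : x = 0
  · simp [hx, h0.mpr hx]
  · rw [dif_neg hx, dif_neg (h0.not.mpr hx)]
    simp only [hs]

theorem val_eq_val_sub_of_lt {x y : LaurentSeries K} (h : val (x - y) < val y) :
    val x = val (x - y) := by
  have := HahnSeries.orderTop_add_eq_left (x := x - y) (y := y) h
  rwa [sub_add_cancel] at this

theorem val_add_eq_right {x y : LaurentSeries K} (h : val y < val x) : val (x + y) = val y :=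
  HahnSeries.orderTop_add_eq_right h

theorem val_sub_eq_right {x y : LaurentSeries K} (h : val y < val x) : val (x - y) = val y := by
  have hneg : val (-y) = val y := HahnSeries.orderTop_neg
  rw [sub_eq_add_neg, val_add_eq_right (hneg ▸ h), hneg]

end Valuation

namespace IsFrobenius

variable {K : Type*} [Field K] {q : ℕ} {σ : LaurentSeries K → LaurentSeries K}

theorem val_apply (hσ : IsFrobenius K q σ) (hq : q ≠ 0) (x : LaurentSeries K) :
    val (σ x) = val x :=
  val_eq_of_coeff_ne_zero_iff fun n => by rw [hσ, pow_ne_zero_iff hq]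

variable {F : Type*} [Field F] [Fintype F] [Algebra F K]

theorem apply_eq_map (hσ : IsFrobenius K (Fintype.card F) σ) (x : LaurentSeries K) :
    σ x = x.map (FiniteField.frobeniusAlgHom F K : K →+* K) := by
  ext n
  simp [hσ x n]

theorem apply_sub (hσ : IsFrobenius K (Fintype.card F) σ) (x y : LaurentSeries K) :
    σ (x - y) = σ x - σ y := by
  simp only [hσ.apply_eq_map]
  exact HahnSeries.map_sub (FiniteField.frobeniusAlgHom F K : K →+* K).toAddMonoidHom

theorem apply_mul (hσ : IsFrobenius K (Fintype.card F) σ) (x y : LaurentSeries K) :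
    σ (x * y) = σ x * σ y := by
  simp only [hσ.apply_eq_map]
  exact HahnSeries.map_mul (FiniteField.frobeniusAlgHom F K : K →+* K).toNonUnitalRingHom

end IsFrobenius

section Twist

variable {K : Type*} [Field K]

theorem val_eps_zpow_mul_sub_of_lt {m n : ℤ} (hnm : n < m) {u v : LaurentSeries K}
    (h : val v = val u) : val (eps K ^ m * v - eps K ^ n * u) = n + val u := by
  by_cases hu : u = 0
  · rw [hu, val_eq_top_iff.mpr rfl, val_eq_top_iff] at h
    simp [hu, h, val]
  have hu' : val u ≠ ⊤ := val_eq_top_iff.not.mpr hu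
  have hlt : val (eps K ^ n * u) < val (eps K ^ m * v) := by
    rw [val_eps_zpow_mul, val_eps_zpow_mul, h]
    exact WithTop.add_lt_add_right hu' (WithTop.coe_lt_coe.mpr hnm)
  rw [val_sub_eq_right hlt, val_eps_zpow_mul]

theorem val_eq_of_val_eps_zpow_mul_sub {m n r : ℤ} (hnm : n < m) {u v : LaurentSeries K}
    (h : val v = val u) (hr : val (eps K ^ m * v - eps K ^ n * u) = r) : val u = ↑(r - n) :=
  WithTop.eq_coe_sub_of_coe_add_eq <| by rw [← hr, val_eps_zpow_mul_sub_of_lt hnm h]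

end Twist

theorem case_d_min_k_gt_e_valuations_general (F : Type*) [Field F] [Fintype F]
    (σ : LaurentSeries (AlgebraicClosure F) → LaurentSeries (AlgebraicClosure F))
    (hσ : IsFrobenius (AlgebraicClosure F) (Fintype.card F) σ)
    (a b c : LaurentSeries (AlgebraicClosure F))
    (i j k : ℤ) (hij : j < i) (hjk : k < j) (hijk : i + j + k = 0)
    (d e f : ℤ) (hde : d ≤ e) (hdef : d + e + f = 0)
    (hke : e < k)
    (α β γ : LaurentSeries (AlgebraicClosure F))
    (hα : α = eps (AlgebraicClosure F) ^ i * σ a - eps (AlgebraicClosure F) ^ j * a)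
    (hβ : β = eps (AlgebraicClosure F) ^ i * σ b - eps (AlgebraicClosure F) ^ k * b -
      a * (eps (AlgebraicClosure F) ^ j * σ c - eps (AlgebraicClosure F) ^ k * c))
    (hγ : γ = eps (AlgebraicClosure F) ^ j * σ c - eps (AlgebraicClosure F) ^ k * c)
    (hvα : val α = (d : WithTop ℤ))
    (hvβ : (d : WithTop ℤ) ≤ val β)
    (hminor : val (α * γ - β * eps (AlgebraicClosure F) ^ j) = ((d + e : ℤ) : WithTop ℤ)) :
    val a = ((d - j : ℤ) : WithTop ℤ) ∧ d - j < 0 ∧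
    val c = ((e - k : ℤ) : WithTop ℤ) ∧ e - k < 0 ∧
    val b = ((i - f : ℤ) : WithTop ℤ) ∧ val b < val a ∧
    val (b - a * c) = ((d + e - 2 * k : ℤ) : WithTop ℤ) ∧
    val (b - a * c) < val c := by
  set ε := eps (AlgebraicClosure F)
  have hvσ := hσ.val_apply Fintype.card_ne_zero
  have lt_val_β {t : ℤ} (ht : t < d) : (t : WithTop ℤ) < val β :=
    (WithTop.coe_lt_coe.mpr ht).trans_le hvβ
  have hva : val a = ↑(d - j) := val_eq_of_val_eps_zpow_mul_sub hij (hvσ a) (hα ▸ hvα)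
  have hvαγ : val (α * γ) = ↑(d + e) := by
    refine hminor ▸ val_eq_val_sub_of_lt (hminor ▸ ?_)
    rw [mul_comm, val_eps_zpow_mul]
    exact (WithTop.coe_lt_coe.mpr (by omega : d + e < j + d)).trans_le (by push_cast; gcongr)
  have hvγ : val γ = ↑e := by
    rw [val_mul, hvα] at hvαγ
    rw [WithTop.eq_coe_sub_of_coe_add_eq hvαγ, add_sub_cancel_left]
  have hvc : val c = ↑(e - k) := val_eq_of_val_eps_zpow_mul_sub hjk (hvσ c) (hγ ▸ hvγ)
  have hvb : val b = ↑(i - f) := by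
    have hvaγ : val (a * γ) = ↑(d - j + e) := by rw [val_mul, hva, hvγ]; rfl
    have htwist : ε ^ i * σ b - ε ^ k * b = β + a * γ := by rw [hβ, hγ]; ring
    rw [val_eq_of_val_eps_zpow_mul_sub (hjk.trans hij) (hvσ b)
      (htwist ▸ hvaγ ▸ val_add_eq_right (hvaγ ▸ lt_val_β (by omega)))]
    congr 1; omega
  have hvbac : val (b - a * c) = ↑(d + e - 2 * k) := by
    have hvασc : val (α * σ c) = ↑(d + (e - k)) := by rw [val_mul, hvα, hvσ, hvc]; rfl
    have htwist : ε ^ i * σ (b - a * c) - ε ^ k * (b - a * c) = β - α * σ c := by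
      rw [hσ.apply_sub, hσ.apply_mul, hα, hβ]; ring
    rw [val_eq_of_val_eps_zpow_mul_sub (hjk.trans hij) (hvσ _)
      (htwist ▸ hvασc ▸ val_sub_eq_right (hvασc ▸ lt_val_β (by omega)))]
    congr 1; omega
  refine ⟨hva, by omega, hvc, by omega, hvb, ?_, hvbac, ?_⟩
  · rw [hvb, hva]; exact WithTop.coe_lt_coe.mpr (by omega)
  · rw [hvbac, hvc]; exact WithTop.coe_lt_coe.mpr (by omega)

/-- the case `k > e` for `x = ε^{(d,e,f)}s_2s_1`, `d ≤ e < f`: under the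
stated valuation conditions on `α`, `β` and `αγ − βε^j`, one has `val(a) = d − j < 0`,
`val(c) = e − k < 0`, `val(b) = i − f` with `val(b) < val(a)`, and
`val(b − ac) = d + e − 2k < val(c)`. -/
theorem case_d_min_k_gt_e_valuations (F : Type*) [Field F] [Fintype F]
    (σ : LaurentSeries (AlgebraicClosure F) → LaurentSeries (AlgebraicClosure F))
    (hσ : IsFrobenius (AlgebraicClosure F) (Fintype.card F) σ)
    (a b c : LaurentSeries (AlgebraicClosure F))
    (i j k : ℤ) (hij : j < i) (hjk : k < j) (hijk : i + j + k = 0)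
    (d e f : ℤ) (hde : d ≤ e) (hef : e < f) (hdef : d + e + f = 0)
    (hke : e < k)
    (α β γ : LaurentSeries (AlgebraicClosure F))
    (hα : α = eps (AlgebraicClosure F) ^ i * σ a - eps (AlgebraicClosure F) ^ j * a)
    (hβ : β = eps (AlgebraicClosure F) ^ i * σ b - eps (AlgebraicClosure F) ^ k * b -
      a * (eps (AlgebraicClosure F) ^ j * σ c - eps (AlgebraicClosure F) ^ k * c))
    (hγ : γ = eps (AlgebraicClosure F) ^ j * σ c - eps (AlgebraicClosure F) ^ k * c)
    (hvα : val α = (d : WithTop ℤ))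
    (hvβ : (d : WithTop ℤ) ≤ val β)
    (hminor : val (α * γ - β * eps (AlgebraicClosure F) ^ j) = ((d + e : ℤ) : WithTop ℤ)) :
    val a = ((d - j : ℤ) : WithTop ℤ) ∧ d - j < 0 ∧
    val c = ((e - k : ℤ) : WithTop ℤ) ∧ e - k < 0 ∧
    val b = ((i - f : ℤ) : WithTop ℤ) ∧ val b < val a ∧
    val (b - a * c) = ((d + e - 2 * k : ℤ) : WithTop ℤ) ∧
    val (b - a * c) < val c :=
  case_d_min_k_gt_e_valuations_general F σ hσ a b c i j k hij hjk hijk d e f hde hdef hke α β γ hα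
    hβ hγ hvα hvβ hminor
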